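/- Let d ≥ 3, let e₁ = (1,0,…,0) ∈ ℝ^d, c_k = 2^k e₁, C_k = Q(c_k, 1/(2k)), and for τ > 3 let d_n = c_n + (τ/n) e₁ and D_n = Q(d_n, 1/(2n)). There exists a constant C > 0, depending only on d, such that: for every τ > 3 and every integer n ≥ 2 with (τ+1)/n ≤ 1/2, and every x ∈ D_n, one has Σ_{k ≥ 2, k ≠ n} k² ∫_{C_k} |z − x|^{2−d} dz ≤ C (n + 1) 2^{n(2−d)}. -/

import Mathlib

open MeasureTheory
open scoped ENNReal

noncomputable section

/-- `ℝ^d` as a Euclidean space. -/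
abbrev Rd (d : ℕ) := EuclideanSpace ℝ (Fin d)

/-- The open cube `Q(c,r) = {y : max_i |c_i - y_i| < r}`. -/
def cubeSet {d : ℕ} (c : Rd d) (r : ℝ) : Set (Rd d) := {y | ∀ i, |c i - y i| < r}

/-- The first standard basis vector `e₁ = (1,0,…,0)`. -/
def e1 (d : ℕ) [NeZero d] : Rd d := EuclideanSpace.single 0 1

/-- The center `c_n = 2^n e₁`. -/
def cn (d : ℕ) [NeZero d] (n : ℕ) : Rd d := (2 : ℝ) ^ n • e1 d

/-- The cube `C_n = Q(c_n, 1/(2n))`. -/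
def Ck (d : ℕ) [NeZero d] (n : ℕ) : Set (Rd d) := cubeSet (cn d n) (1 / (2 * n))

/-- The shifted center `d_n = c_n + (τ/n) e₁`. -/
def dn (d : ℕ) [NeZero d] (τ : ℝ) (n : ℕ) : Rd d := cn d n + (τ / n) • e1 d

/-- The shifted cube `D_n = Q(d_n, 1/(2n))`. -/
def Dn (d : ℕ) [NeZero d] (τ : ℝ) (n : ℕ) : Set (Rd d) := cubeSet (dn d τ n) (1 / (2 * n))

/-! On the first coordinate, points of `D_n` lie within `1/2` of `2^n` and points of `C_k` within
`1/2` of `2^k`, so for `k ≠ n` they are at distance at least `2^(max k n - 2)`. With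
`q = 2^(2-d) ≤ 1/2` and `k² |C_k| = k^(2-d) ≤ 1`, the `k`-th term is at most `q^(max k n - 2)`:
the `n + 1` indices `k ≤ n` contribute `(n + 1) q^(n-2)`, and the indices `k > n` a geometric tail
bounded by `q^(n-2)`. -/

lemma volume_cubeSet {d : ℕ} (c : Rd d) {r : ℝ} (hr : 0 < r) :
    volume (cubeSet c r) = ENNReal.ofReal ((2 * r) ^ d) := by
  have hball : cubeSet c r = WithLp.ofLp ⁻¹' Metric.ball (WithLp.ofLp c) r := by
    ext y
    simp [cubeSet, dist_pi_lt_iff hr, Real.dist_eq, abs_sub_comm]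
  rw [hball, (PiLp.volume_preserving_ofLp (Fin d)).measure_preimage
    measurableSet_ball.nullMeasurableSet, Real.volume_pi_ball _ hr, Fintype.card_fin]

lemma volume_Ck (d : ℕ) [NeZero d] {k : ℕ} (hk : k ≠ 0) :
    volume (Ck d k) = ((k : ℝ≥0∞)⁻¹) ^ d := by
  have hk' : (0 : ℝ) < k := by positivity
  rw [Ck, volume_cubeSet _ (by positivity), ENNReal.ofReal_pow (by positivity),
    show 2 * (1 / (2 * (k : ℝ))) = (k : ℝ)⁻¹ by field_simp, ENNReal.ofReal_inv_of_pos hk',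
    ENNReal.ofReal_natCast]

lemma natCast_sq_mul_inv_pow_le_one {k d : ℕ} (hk : k ≠ 0) (hd : 2 ≤ d) :
    (k : ℝ≥0∞) ^ 2 * ((k : ℝ≥0∞)⁻¹) ^ d ≤ 1 := by
  have hinv : (k : ℝ≥0∞)⁻¹ ≤ 1 :=
    ENNReal.inv_le_one.mpr (by exact_mod_cast Nat.one_le_iff_ne_zero.mpr hk)
  calc (k : ℝ≥0∞) ^ 2 * ((k : ℝ≥0∞)⁻¹) ^ d ≤ (k : ℝ≥0∞) ^ 2 * ((k : ℝ≥0∞)⁻¹) ^ 2 := by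
        exact mul_le_mul_right (pow_le_pow_right_of_le_one' hinv hd) _
    _ = 1 := by
        rw [← mul_pow, ENNReal.mul_inv_cancel (by exact_mod_cast hk) (by simp), one_pow]

@[simp]
lemma cn_apply_zero (d : ℕ) [NeZero d] (k : ℕ) : cn d k 0 = 2 ^ k := by
  simp [cn, e1]

@[simp]
lemma dn_apply_zero (d : ℕ) [NeZero d] (τ : ℝ) (n : ℕ) : dn d τ n 0 = 2 ^ n + τ / n := by
  simp [dn, cn, e1]

lemma abs_apply_zero_sub_two_pow_le_of_mem_Ck {d : ℕ} [NeZero d] {k : ℕ} (hk : k ≠ 0)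
    {z : Rd d} (hz : z ∈ Ck d k) : |z 0 - 2 ^ k| ≤ 1 / 2 := by
  have hz0 : |2 ^ k - z 0| < 1 / (2 * k) := by simpa using hz 0
  have hk' : (1 : ℝ) ≤ k := by exact_mod_cast Nat.one_le_iff_ne_zero.mpr hk
  rw [abs_sub_comm]
  exact hz0.le.trans (by gcongr; linarith)

lemma abs_apply_zero_sub_two_pow_le_of_mem_Dn {d : ℕ} [NeZero d] {τ : ℝ} (hτ : 0 ≤ τ)
    {n : ℕ} (hn : n ≠ 0) (hτn : (τ + 1) / n ≤ 1 / 2) {x : Rd d} (hx : x ∈ Dn d τ n) :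
    |x 0 - 2 ^ n| ≤ 1 / 2 := by
  have hx0 : |2 ^ n + τ / n - x 0| < 1 / (2 * n) := by simpa using hx 0
  have hn' : (0 : ℝ) < n := by positivity
  have hτn' : τ / n + 1 / (2 * n) ≤ 1 / 2 := by
    calc τ / n + 1 / (2 * n) ≤ (τ + 1) / n := by
          rw [add_div]; gcongr; linarith
      _ ≤ 1 / 2 := hτn
  have : 0 ≤ τ / n := by positivity
  rw [abs_le]
  constructor <;> linarith [(abs_lt.mp hx0).1, (abs_lt.mp hx0).2]

lemma two_pow_max_sub_two_le_abs_sub {k n : ℕ} (hk : 2 ≤ k) (hn : 2 ≤ n) (hkn : k ≠ n)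
    {a b : ℝ} (ha : |a - 2 ^ k| ≤ 1 / 2) (hb : |b - 2 ^ n| ≤ 1 / 2) :
    (2 : ℝ) ^ (max k n - 2) ≤ |a - b| := by
  wlog hlt : k < n generalizing k n a b
  · rw [max_comm, abs_sub_comm]
    exact this hn hk hkn.symm hb ha (by omega)
  obtain ⟨j, rfl⟩ : ∃ j, n = j + 2 := ⟨n - 2, by omega⟩
  rw [max_eq_right hlt.le, Nat.add_sub_cancel]
  have hk_le : (2 : ℝ) ^ k ≤ 2 * 2 ^ j := by
    rw [← pow_succ']; exact pow_le_pow_right₀ one_le_two (by omega)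
  have hj : (1 : ℝ) ≤ 2 ^ j := one_le_pow₀ one_le_two
  have hn_eq : (2 : ℝ) ^ (j + 2) = 4 * 2 ^ j := by ring
  rw [abs_le] at ha hb
  rw [abs_sub_comm]
  exact le_trans (by linarith) (le_abs_self _)

lemma two_pow_max_sub_two_le_norm_sub {d : ℕ} [NeZero d] {τ : ℝ} (hτ : 0 ≤ τ) {k n : ℕ}
    (hk : 2 ≤ k) (hn : 2 ≤ n) (hkn : k ≠ n) (hτn : (τ + 1) / n ≤ 1 / 2)
    {x z : Rd d} (hx : x ∈ Dn d τ n) (hz : z ∈ Ck d k) :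
    (2 : ℝ) ^ (max k n - 2) ≤ ‖z - x‖ := by
  have h := two_pow_max_sub_two_le_abs_sub hk hn hkn
    (abs_apply_zero_sub_two_pow_le_of_mem_Ck (by omega) hz)
    (abs_apply_zero_sub_two_pow_le_of_mem_Dn hτ (by omega) hτn hx)
  simpa using h.trans (PiLp.norm_apply_le (z - x) 0)

lemma rpow_le_pow_of_two_pow_le {s t : ℝ} (hs : s ≤ 0) {m : ℕ} (h : 2 ^ m ≤ t) :
    t ^ s ≤ ((2 : ℝ) ^ s) ^ m := by
  rw [Real.rpow_pow_comm zero_le_two]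
  exact Real.rpow_le_rpow_of_nonpos (by positivity) h hs

lemma natCast_sq_mul_setLIntegral_Ck_le {d : ℕ} [NeZero d] (hd : 2 ≤ d) {τ : ℝ} (hτ : 0 ≤ τ)
    {k n : ℕ} (hk : 2 ≤ k) (hn : 2 ≤ n) (hkn : k ≠ n) (hτn : (τ + 1) / n ≤ 1 / 2)
    {x : Rd d} (hx : x ∈ Dn d τ n) :
    (k : ℝ≥0∞) ^ 2 * ∫⁻ z in Ck d k, ENNReal.ofReal (‖z - x‖ ^ ((2 : ℝ) - d))
      ≤ ENNReal.ofReal (((2 : ℝ) ^ ((2 : ℝ) - d)) ^ (max k n - 2)) := by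
  have hs : (2 : ℝ) - d ≤ 0 := by
    have : (2 : ℝ) ≤ d := by exact_mod_cast hd
    linarith
  set c := ENNReal.ofReal (((2 : ℝ) ^ ((2 : ℝ) - d)) ^ (max k n - 2))
  calc (k : ℝ≥0∞) ^ 2 * ∫⁻ z in Ck d k, ENNReal.ofReal (‖z - x‖ ^ ((2 : ℝ) - d))
      ≤ (k : ℝ≥0∞) ^ 2 * (c * volume (Ck d k)) := by
        gcongr
        rw [← setLIntegral_const]
        exact setLIntegral_mono measurable_const fun z hz => ENNReal.ofReal_le_ofReal
          (rpow_le_pow_of_two_pow_le hs (two_pow_max_sub_two_le_norm_sub hτ hk hn hkn hτn hx hz))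
    _ = c * ((k : ℝ≥0∞) ^ 2 * ((k : ℝ≥0∞)⁻¹) ^ d) := by
        rw [volume_Ck d (by omega)]; ring
    _ ≤ c := mul_le_of_le_one_right' (natCast_sq_mul_inv_pow_le_one (by omega) hd)

lemma pow_max_sub_two_add {q : ℝ} {n : ℕ} (hn : 1 ≤ n) (i : ℕ) :
    q ^ (max (i + (n + 1)) n - 2) = q ^ (n - 1) * q ^ i := by
  rw [max_eq_left (by omega), ← pow_add]
  congr 1
  omega

lemma summable_pow_max_sub_two {q : ℝ} (hq₀ : 0 ≤ q) (hq : q < 1) {n : ℕ} (hn : 1 ≤ n) :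
    Summable fun k => q ^ (max k n - 2) := by
  rw [← summable_nat_add_iff (n + 1)]
  simp_rw [pow_max_sub_two_add hn]
  exact (summable_geometric_of_lt_one hq₀ hq).mul_left _

lemma tsum_pow_max_sub_two_le {q : ℝ} (hq₀ : 0 ≤ q) (hq : q ≤ 1 / 2) {n : ℕ} (hn : 2 ≤ n) :
    ∑' k, q ^ (max k n - 2) ≤ (n + 2) * q ^ (n - 2) := by
  have hq1 : q < 1 := by linarith
  have hsplit := (summable_pow_max_sub_two hq₀ hq1 (n := n) (by omega)).sum_add_tsum_nat_add (n + 1)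
  have hhead : ∑ i ∈ Finset.range (n + 1), q ^ (max i n - 2) = (n + 1) * q ^ (n - 2) := by
    rw [Finset.sum_congr rfl fun i hi => by
      rw [max_eq_right (Nat.lt_succ_iff.mp (Finset.mem_range.mp hi))]]
    simp
  have htail : ∑' i, q ^ (max (i + (n + 1)) n - 2) ≤ q ^ (n - 2) := by
    simp_rw [pow_max_sub_two_add (q := q) (by omega : 1 ≤ n)]
    rw [tsum_mul_left, tsum_geometric_of_lt_one hq₀ hq1,
      show n - 1 = n - 2 + 1 by omega, pow_succ]
    have : (1 - q)⁻¹ ≤ 2 := by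
      rw [inv_le_comm₀ (by linarith) two_pos]; linarith
    calc q ^ (n - 2) * q * (1 - q)⁻¹ ≤ q ^ (n - 2) * (1 / 2) * 2 := by gcongr
      _ = q ^ (n - 2) := by ring
  rw [← hsplit, hhead]
  linarith

/-- there is `C > 0`, depending only on `d`, such that for every `τ > 3`,
every `n ≥ 2` with `(τ+1)/n ≤ 1/2`, and every `x ∈ D_n`,
`∑_{k ≥ 2, k ≠ n} k² ∫_{C_k} |z-x|^{2-d} dz ≤ C (n+1) 2^{n(2-d)}`. -/
theorem statement11 (d : ℕ) [NeZero d] (hd : 3 ≤ d) :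
    ∃ C > (0 : ℝ), ∀ τ : ℝ, 3 < τ → ∀ n : ℕ, 2 ≤ n → (τ + 1) / n ≤ 1 / 2 →
      ∀ x ∈ Dn d τ n,
      (∑' k : ℕ, if 2 ≤ k ∧ k ≠ n then
          (k : ℝ≥0∞) ^ 2 * (∫⁻ z in Ck d k, ENNReal.ofReal (‖z - x‖ ^ ((2 : ℝ) - (d : ℝ))))
        else 0)
        ≤ ENNReal.ofReal (C * ((n : ℝ) + 1) * (2 : ℝ) ^ ((n : ℝ) * ((2 : ℝ) - (d : ℝ)))) := by
  set q : ℝ := (2 : ℝ) ^ ((2 : ℝ) - d)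
  have hq₀ : 0 < q := by positivity
  have hq : q ≤ 1 / 2 := by
    have : (3 : ℝ) ≤ d := by exact_mod_cast hd
    calc q ≤ (2 : ℝ) ^ (-1 : ℝ) := Real.rpow_le_rpow_of_exponent_le one_le_two (by linarith)
      _ = 1 / 2 := by rw [Real.rpow_neg_one, one_div]
  refine ⟨2 * (q ^ 2)⁻¹, by positivity, fun τ hτ n hn hτn x hx => ?_⟩
  have hterm : ∀ k : ℕ, (if 2 ≤ k ∧ k ≠ n then
        (k : ℝ≥0∞) ^ 2 * (∫⁻ z in Ck d k, ENNReal.ofReal (‖z - x‖ ^ ((2 : ℝ) - (d : ℝ))))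
      else 0) ≤ ENNReal.ofReal (q ^ (max k n - 2)) := by
    intro k
    split_ifs with hk
    · exact natCast_sq_mul_setLIntegral_Ck_le (by omega) (by linarith) hk.1 hn hk.2 hτn hx
    · exact zero_le
  calc _ ≤ ∑' k : ℕ, ENNReal.ofReal (q ^ (max k n - 2)) := ENNReal.tsum_le_tsum hterm
    _ = ENNReal.ofReal (∑' k : ℕ, q ^ (max k n - 2)) :=
        (ENNReal.ofReal_tsum_of_nonneg (fun _ => by positivity)
          (summable_pow_max_sub_two hq₀.le (by linarith) (by omega))).symm
    _ ≤ _ := by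
        gcongr
        calc ∑' k : ℕ, q ^ (max k n - 2) ≤ (n + 2) * q ^ (n - 2) :=
              tsum_pow_max_sub_two_le hq₀.le hq hn
          _ ≤ 2 * (n + 1) * q ^ (n - 2) := by gcongr; linarith
          _ = 2 * (q ^ 2)⁻¹ * (n + 1) * (2 : ℝ) ^ ((n : ℝ) * (2 - d)) := by
              rw [mul_comm (n : ℝ), Real.rpow_mul_natCast zero_le_two, pow_sub₀ _ hq₀.ne' hn]
              ring
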